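/- Let λ > 0, let g(t) = e^{-λt}(1 + λt + (λt)²/2), and let A be a nonnegative, bounded random variable. Let s₀ be the unique positive root of 1 = e^{-s}(s³/2 + s²/2 + s + 1). If λ·E[A] ≥ s₀, then g(E[A]) ≤ E[g(A)]. -/

import Mathlib

/-!
Write `g s = e^{-s} (1 + s + s²/2)`, so that `g' = -ψ` with `ψ s = e^{-s} s²/2`. Since `ψ` increases
on `[0, 2]` and decreases on `[2, ∞)`, `g` is concave on `[0, 2]` and convex on `[2, ∞)`. The
tangent line of `g` at `m` meets the axis `s = 0` at height `g m + m ψ m = e^{-m}(m³/2 + m²/2 + m + 1)`,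
which increases on `[0, 2]` and decreases on `[2, ∞)`; it equals `1 = g 0` at `m = 0` and `m = s₀`,
so `s₀ > 2`. For `m ≥ s₀` the tangent at `m` therefore lies below `g` on `[2, ∞)` by convexity and at
`0`, hence on `[0, 2]` by concavity. Integrating this inequality at `m = λ E[A]` gives the claim.
-/

open Real MeasureTheory Set

lemma ConvexOn.add_mul_sub_le_of_hasDerivAt {S : Set ℝ} {f : ℝ → ℝ} {f' x y : ℝ}
    (hf : ConvexOn ℝ S f) (hx : x ∈ S) (hy : y ∈ S) (hf' : HasDerivAt f f' x) :
    f x + f' * (y - x) ≤ f y := by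
  rcases lt_trichotomy x y with hxy | rfl | hxy
  · have := hf.le_slope_of_hasDerivAt hx hy hxy hf'
    rw [slope_def_field, le_div_iff₀ (sub_pos.2 hxy)] at this
    linarith
  · simp
  · have := hf.slope_le_of_hasDerivAt hy hx hxy hf'
    rw [slope_def_field, div_le_iff₀ (sub_pos.2 hxy)] at this
    linarith

lemma map_integral_le_integral_of_affine_le {Ω : Type*} [MeasurableSpace Ω] {μ : Measure Ω}
    [IsProbabilityMeasure μ] {X : Ω → ℝ} {f : ℝ → ℝ} {c : ℝ} (hX : Integrable X μ)
    (hfX : Integrable (fun ω ↦ f (X ω)) μ)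
    (h : ∀ᵐ ω ∂μ, f (∫ ω, X ω ∂μ) + c * (X ω - ∫ ω, X ω ∂μ) ≤ f (X ω)) :
    f (∫ ω, X ω ∂μ) ≤ ∫ ω, f (X ω) ∂μ := by
  set m := ∫ ω, X ω ∂μ
  have hslope : Integrable (fun ω ↦ c * (X ω - m)) μ := (hX.sub (integrable_const m)).const_mul c
  calc f m = ∫ ω, (f m + c * (X ω - m)) ∂μ := by
        rw [integral_add (integrable_const _) hslope, integral_const_mul,
          integral_sub hX (integrable_const m)]
        simp [m]
    _ ≤ ∫ ω, f (X ω) ∂μ := integral_mono_ae ((integrable_const _).add hslope) hfX h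

-- `P(N ≤ 2)` and `P(N = 2)` for a Poisson variable `N` of mean `s`
noncomputable def poissonCdfTwo (s : ℝ) : ℝ := exp (-s) * (1 + s + s ^ 2 / 2)

noncomputable def poissonPmfTwo (s : ℝ) : ℝ := exp (-s) * s ^ 2 / 2

-- the height at `0` of the tangent line of `poissonCdfTwo` at `s`
noncomputable def tangentIntercept (s : ℝ) : ℝ := poissonCdfTwo s + s * poissonPmfTwo s

lemma tangentIntercept_eq (s : ℝ) :
    tangentIntercept s = exp (-s) * (s ^ 3 / 2 + s ^ 2 / 2 + s + 1) := by
  unfold tangentIntercept poissonCdfTwo poissonPmfTwo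
  ring

lemma continuous_poissonCdfTwo : Continuous poissonCdfTwo := by
  unfold poissonCdfTwo; fun_prop

lemma hasDerivAt_exp_neg (s : ℝ) : HasDerivAt (fun s ↦ exp (-s)) (-exp (-s)) s := by
  simpa using (hasDerivAt_neg s).exp

lemma hasDerivAt_poissonCdfTwo (s : ℝ) : HasDerivAt poissonCdfTwo (-poissonPmfTwo s) s :=
  ((hasDerivAt_exp_neg s).fun_mul
    (((hasDerivAt_id' s).const_add 1).fun_add ((hasDerivAt_pow 2 s).div_const 2))).congr_deriv
    (by unfold poissonPmfTwo; ring)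

lemma hasDerivAt_poissonPmfTwo (s : ℝ) :
    HasDerivAt poissonPmfTwo (exp (-s) * s * (2 - s) / 2) s :=
  (((hasDerivAt_exp_neg s).fun_mul (hasDerivAt_pow 2 s)).div_const 2).congr_deriv (by ring)

lemma hasDerivAt_tangentIntercept (s : ℝ) :
    HasDerivAt tangentIntercept (s * (exp (-s) * s * (2 - s) / 2)) s :=
  ((hasDerivAt_poissonCdfTwo s).fun_add ((hasDerivAt_id' s).fun_mul
    (hasDerivAt_poissonPmfTwo s))).congr_deriv (by ring)

lemma deriv_poissonCdfTwo : deriv poissonCdfTwo = -poissonPmfTwo :=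
  funext fun s ↦ (hasDerivAt_poissonCdfTwo s).deriv

lemma poissonCdfTwo_zero : poissonCdfTwo 0 = 1 := by
  simp [poissonCdfTwo]

lemma tangentIntercept_zero : tangentIntercept 0 = 1 := by
  simp [tangentIntercept, poissonCdfTwo_zero]

lemma poissonCdfTwo_pos (s : ℝ) : 0 < poissonCdfTwo s := by
  unfold poissonCdfTwo
  have : 0 < 1 + s + s ^ 2 / 2 := by nlinarith [sq_nonneg (s + 1)]
  positivity

lemma antitone_poissonCdfTwo : Antitone poissonCdfTwo :=
  antitone_of_deriv_nonpos (fun s ↦ (hasDerivAt_poissonCdfTwo s).differentiableAt) fun s ↦ by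
    rw [deriv_poissonCdfTwo, Pi.neg_apply, neg_nonpos, poissonPmfTwo]
    positivity

lemma poissonCdfTwo_le_one {s : ℝ} (hs : 0 ≤ s) : poissonCdfTwo s ≤ 1 :=
  poissonCdfTwo_zero ▸ antitone_poissonCdfTwo hs

lemma monotoneOn_poissonPmfTwo : MonotoneOn poissonPmfTwo (Icc 0 2) := by
  refine monotoneOn_of_deriv_nonneg (convex_Icc 0 2)
    (fun s _ ↦ (hasDerivAt_poissonPmfTwo s).continuousAt.continuousWithinAt)
    (fun s _ ↦ (hasDerivAt_poissonPmfTwo s).differentiableAt.differentiableWithinAt) ?_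
  intro s hs
  rw [interior_Icc] at hs
  rw [(hasDerivAt_poissonPmfTwo s).deriv]
  have : 0 ≤ 2 - s := by linarith [hs.2]
  have : 0 ≤ s := hs.1.le
  positivity

lemma antitoneOn_poissonPmfTwo : AntitoneOn poissonPmfTwo (Ici 2) := by
  refine antitoneOn_of_deriv_nonpos (convex_Ici 2)
    (fun s _ ↦ (hasDerivAt_poissonPmfTwo s).continuousAt.continuousWithinAt)
    (fun s _ ↦ (hasDerivAt_poissonPmfTwo s).differentiableAt.differentiableWithinAt) ?_
  intro s hs
  rw [interior_Ici, mem_Ioi] at hs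
  rw [(hasDerivAt_poissonPmfTwo s).deriv]
  have : 0 ≤ exp (-s) * s := by positivity
  have : exp (-s) * s * (2 - s) ≤ 0 := mul_nonpos_of_nonneg_of_nonpos this (by linarith)
  linarith

lemma concaveOn_poissonCdfTwo : ConcaveOn ℝ (Icc 0 2) poissonCdfTwo := by
  refine AntitoneOn.concaveOn_of_deriv (convex_Icc 0 2) continuous_poissonCdfTwo.continuousOn
    (fun s _ ↦ (hasDerivAt_poissonCdfTwo s).differentiableAt.differentiableWithinAt) ?_
  rw [deriv_poissonCdfTwo]
  exact (monotoneOn_poissonPmfTwo.mono interior_subset).neg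

lemma convexOn_poissonCdfTwo : ConvexOn ℝ (Ici 2) poissonCdfTwo := by
  refine MonotoneOn.convexOn_of_deriv (convex_Ici 2) continuous_poissonCdfTwo.continuousOn
    (fun s _ ↦ (hasDerivAt_poissonCdfTwo s).differentiableAt.differentiableWithinAt) ?_
  rw [deriv_poissonCdfTwo]
  exact (antitoneOn_poissonPmfTwo.mono interior_subset).neg

lemma strictMonoOn_tangentIntercept : StrictMonoOn tangentIntercept (Icc 0 2) := by
  refine strictMonoOn_of_deriv_pos (convex_Icc 0 2)
    (fun s _ ↦ (hasDerivAt_tangentIntercept s).continuousAt.continuousWithinAt) ?_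
  intro s hs
  rw [interior_Icc] at hs
  rw [(hasDerivAt_tangentIntercept s).deriv]
  have : 0 < 2 - s := by linarith [hs.2]
  have : 0 < s := hs.1
  positivity

lemma antitoneOn_tangentIntercept : AntitoneOn tangentIntercept (Ici 2) := by
  refine antitoneOn_of_deriv_nonpos (convex_Ici 2)
    (fun s _ ↦ (hasDerivAt_tangentIntercept s).continuousAt.continuousWithinAt)
    (fun s _ ↦ (hasDerivAt_tangentIntercept s).differentiableAt.differentiableWithinAt) ?_
  intro s hs
  rw [interior_Ici, mem_Ioi] at hs
  rw [(hasDerivAt_tangentIntercept s).deriv]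
  have : 0 ≤ s * exp (-s) * s := by positivity
  nlinarith

lemma two_lt_of_tangentIntercept_eq_one {s : ℝ} (hs : 0 < s) (h : tangentIntercept s = 1) :
    2 < s := by
  by_contra! hs2
  have := strictMonoOn_tangentIntercept ⟨le_rfl, zero_le_two⟩ ⟨hs.le, hs2⟩ hs
  rw [tangentIntercept_zero, h] at this
  exact lt_irrefl _ this

lemma poissonCdfTwo_tangent_le {m s : ℝ} (hm : 2 ≤ m) (hm1 : tangentIntercept m ≤ 1)
    (hs : 0 ≤ s) : poissonCdfTwo m - poissonPmfTwo m * (s - m) ≤ poissonCdfTwo s := by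
  have hconvex : ∀ t, 2 ≤ t → poissonCdfTwo m - poissonPmfTwo m * (t - m) ≤ poissonCdfTwo t :=
    fun t ht ↦ by
      simpa [neg_mul, ← sub_eq_add_neg] using
        convexOn_poissonCdfTwo.add_mul_sub_le_of_hasDerivAt (mem_Ici.2 hm) (mem_Ici.2 ht)
          (hasDerivAt_poissonCdfTwo m)
  rcases le_or_gt 2 s with hs2 | hs2
  · exact hconvex s hs2
  set gap : ℝ → ℝ := fun t ↦ poissonCdfTwo t - (poissonCdfTwo m - poissonPmfTwo m * (t - m))
  have hgap : ConcaveOn ℝ (Icc 0 2) gap := by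
    have hψ : 0 ≤ poissonPmfTwo m := by unfold poissonPmfTwo; positivity
    refine ((concaveOn_poissonCdfTwo.add ((concaveOn_id (convex_Icc 0 2)).smul hψ)).add_const
      (-(poissonCdfTwo m + poissonPmfTwo m * m))).congr fun t _ ↦ ?_
    simp only [gap, Pi.add_apply, id, smul_eq_mul]
    ring
  have h0 : 0 ≤ gap 0 := by
    simp only [gap, poissonCdfTwo_zero]
    rw [tangentIntercept] at hm1
    linarith
  have h2 : 0 ≤ gap 2 := sub_nonneg.2 (hconvex 2 le_rfl)
  have := (le_min h0 h2).trans (hgap.min_le_of_mem_Icc (left_mem_Icc.2 zero_le_two)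
    (right_mem_Icc.2 zero_le_two) ⟨hs, hs2.le⟩)
  exact sub_nonneg.1 this

lemma integrable_poissonCdfTwo_comp {Ω : Type*} [MeasurableSpace Ω] {μ : Measure Ω}
    [IsFiniteMeasure μ] {X : Ω → ℝ} (hX : AEStronglyMeasurable X μ) (hX0 : ∀ ω, 0 ≤ X ω) :
    Integrable (fun ω ↦ poissonCdfTwo (X ω)) μ :=
  .of_bound (continuous_poissonCdfTwo.comp_aestronglyMeasurable hX) 1 (ae_of_all _ fun ω ↦ by
    rw [norm_of_nonneg (poissonCdfTwo_pos _).le]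
    exact poissonCdfTwo_le_one (hX0 ω))

theorem stmt_8_general {Ω : Type*} [MeasurableSpace Ω] (μ : Measure Ω) [IsProbabilityMeasure μ]
    (lam : ℝ) (hlam : 0 < lam)
    (A : Ω → ℝ) (hA : Measurable A) (hA0 : ∀ ω, 0 ≤ A ω)
    (s₀ : ℝ) (hs₀ : 0 < s₀)
    (hroot : Real.exp (-s₀) * (s₀ ^ 3 / 2 + s₀ ^ 2 / 2 + s₀ + 1) = 1)
    (hmean : s₀ ≤ lam * ∫ ω, A ω ∂μ) :
    Real.exp (-lam * ∫ ω, A ω ∂μ)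
        * (1 + lam * ∫ ω, A ω ∂μ + (lam * ∫ ω, A ω ∂μ) ^ 2 / 2)
      ≤ ∫ ω, Real.exp (-lam * A ω) * (1 + lam * A ω + (lam * A ω) ^ 2 / 2) ∂μ := by
  have hAint : Integrable A μ := by
    -- otherwise `∫ A = 0` by convention
    by_contra h
    rw [integral_undef h, mul_zero] at hmean
    linarith
  have hX0 : ∀ ω, 0 ≤ lam * A ω := fun ω ↦ mul_nonneg hlam.le (hA0 ω)
  rw [← tangentIntercept_eq] at hroot
  have hs₀2 : 2 < s₀ := two_lt_of_tangentIntercept_eq_one hs₀ hroot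
  have hm2 : 2 ≤ lam * ∫ ω, A ω ∂μ := hs₀2.le.trans hmean
  have hm1 : tangentIntercept (lam * ∫ ω, A ω ∂μ) ≤ 1 :=
    hroot ▸ antitoneOn_tangentIntercept hs₀2.le hm2 hmean
  have hXmean : ∫ ω, lam * A ω ∂μ = lam * ∫ ω, A ω ∂μ := integral_const_mul lam A
  have key := map_integral_le_integral_of_affine_le (hAint.const_mul lam)
    (integrable_poissonCdfTwo_comp (hA.const_mul lam).aestronglyMeasurable hX0)
    (c := -poissonPmfTwo (lam * ∫ ω, A ω ∂μ)) (ae_of_all _ fun ω ↦ by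
      rw [hXmean, neg_mul, ← sub_eq_add_neg]
      exact poissonCdfTwo_tangent_le hm2 hm1 (hX0 ω))
  rw [hXmean] at key
  simpa only [poissonCdfTwo, neg_mul] using key

theorem stmt_8 {Ω : Type*} [MeasurableSpace Ω] (μ : Measure Ω) [IsProbabilityMeasure μ]
    (lam : ℝ) (hlam : 0 < lam)
    (A : Ω → ℝ) (hA : Measurable A) (hA0 : ∀ ω, 0 ≤ A ω) (C : ℝ) (hAC : ∀ ω, A ω ≤ C)
    (s₀ : ℝ) (hs₀ : 0 < s₀)
    (hroot : Real.exp (-s₀) * (s₀ ^ 3 / 2 + s₀ ^ 2 / 2 + s₀ + 1) = 1)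
    (hmean : s₀ ≤ lam * ∫ ω, A ω ∂μ) :
    Real.exp (-lam * ∫ ω, A ω ∂μ)
        * (1 + lam * ∫ ω, A ω ∂μ + (lam * ∫ ω, A ω ∂μ) ^ 2 / 2)
      ≤ ∫ ω, Real.exp (-lam * A ω) * (1 + lam * A ω + (lam * A ω) ^ 2 / 2) ∂μ :=
  stmt_8_general μ lam hlam A hA hA0 s₀ hs₀ hroot hmean
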